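/- Let H be a nonzero complex Hilbert space and T a densely defined closed simple symmetric operator in H. Let U be a unitary operator on H that is a symmetry of T, i.e. U(D(T)) = D(T) and T(Ux) = U(Tx) for every x ∈ D(T). If c ∈ ℂ is such that Ux − c·x ∈ D(T) for every x ∈ D(T*), then |c| = 1 and U = c·Id on H. -/

import Mathlib

/-!
A unitary symmetry `U` of `T` commutes with `T*`, so it maps each deficiency space
`ker(T* − λ)` into itself. For `v` in such a space, `y = Uv − cv` therefore satisfies
`T* y = λ y`; since `y ∈ D(T)` and `T ⊆ T*`, `y` is an eigenvector of the symmetric operator `T`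
with non-real eigenvalue `λ`, hence `y = 0`. So `U = c` on the deficiency spaces, which span a
dense subspace because `T` is simple, and by continuity `U = c` everywhere; as `U` is isometric
and `H ≠ 0`, `|c| = 1`.
-/

noncomputable section

open Complex

variable {H : Type*} [NormedAddCommGroup H] [InnerProductSpace ℂ H] [CompleteSpace H]

/-- The deficiency subspace `ker(T* − λ) = {x ∈ D(T*) : T*x = λx}` of `H`. -/
def defect (T : H →ₗ.[ℂ] H) (lam : ℂ) : Submodule ℂ H :=
  Submodule.map T.adjoint.domain.subtype
    (LinearMap.ker (T.adjoint.toFun - lam • T.adjoint.domain.subtype))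

theorem mem_defect_iff {T : H →ₗ.[ℂ] H} {lam : ℂ} {x : H} :
    x ∈ defect T lam ↔ ∃ y : T.adjoint.domain, (y : H) = x ∧ T.adjoint y = lam • (y : H) := by
  simp only [defect, Submodule.mem_map, LinearMap.mem_ker, LinearMap.sub_apply,
    LinearMap.smul_apply, Submodule.subtype_apply, sub_eq_zero]
  exact ⟨fun ⟨y, hy, hyx⟩ => ⟨y, hyx, hy⟩, fun ⟨y, hyx, hy⟩ => ⟨y, hy, hyx⟩⟩

namespace LinearPMap

section

variable {𝕜 E : Type*} [RCLike 𝕜] [NormedAddCommGroup E] [InnerProductSpace 𝕜 E]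

theorem IsFormalAdjoint.eq_zero_of_apply_eq_smul {T : E →ₗ.[𝕜] E} (hT : T.IsFormalAdjoint T)
    {lam : 𝕜} (hlam : RCLike.im lam ≠ 0) {x : T.domain} (hx : T x = lam • (x : E)) :
    (x : E) = 0 := by
  by_contra hne
  have h := hT x x
  rw [hx, inner_smul_left, inner_smul_right] at h
  exact hlam (RCLike.conj_eq_iff_im.mp (mul_right_cancel₀ (inner_self_ne_zero.mpr hne) h))

variable [CompleteSpace E] {T : E →ₗ.[𝕜] E} {U : E ≃ₗᵢ[𝕜] E}

theorem inner_map_adjoint_apply (hT : Dense (T.domain : Set E))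
    (hUdom : ∀ x : E, x ∈ T.domain ↔ U x ∈ T.domain)
    (hUT : ∀ x : T.domain, T ⟨U (x : E), (hUdom (x : E)).mp x.2⟩ = U (T x))
    (y : T.adjoint.domain) (x : T.domain) :
    inner 𝕜 (U (T.adjoint y)) (x : E) = inner 𝕜 (U (y : E)) (T x) := by
  have hx' : U.symm (x : E) ∈ T.domain := (hUdom _).mpr (by simp)
  have hTx' : T ⟨U.symm (x : E), hx'⟩ = U.symm (T x) := by
    rw [U.eq_symm_apply, ← hUT]
    congr
    exact U.apply_symm_apply _
  calc inner 𝕜 (U (T.adjoint y)) (x : E)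
      = inner 𝕜 (T.adjoint y) (U.symm (x : E)) := by
        rw [← U.inner_map_map (T.adjoint y), U.apply_symm_apply]
    _ = inner 𝕜 (y : E) (T ⟨U.symm (x : E), hx'⟩) := adjoint_isFormalAdjoint hT y ⟨_, hx'⟩
    _ = inner 𝕜 (U (y : E)) (T x) := by
        rw [hTx', ← U.inner_map_map, U.apply_symm_apply]

theorem map_mem_adjoint_domain (hT : Dense (T.domain : Set E))
    (hUdom : ∀ x : E, x ∈ T.domain ↔ U x ∈ T.domain)
    (hUT : ∀ x : T.domain, T ⟨U (x : E), (hUdom (x : E)).mp x.2⟩ = U (T x))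
    (y : T.adjoint.domain) : U (y : E) ∈ T.adjoint.domain :=
  mem_adjoint_domain_of_exists _ ⟨_, inner_map_adjoint_apply hT hUdom hUT y⟩

theorem adjoint_apply_map (hT : Dense (T.domain : Set E))
    (hUdom : ∀ x : E, x ∈ T.domain ↔ U x ∈ T.domain)
    (hUT : ∀ x : T.domain, T ⟨U (x : E), (hUdom (x : E)).mp x.2⟩ = U (T x))
    (y : T.adjoint.domain) :
    T.adjoint ⟨U (y : E), map_mem_adjoint_domain hT hUdom hUT y⟩ = U (T.adjoint y) :=
  adjoint_apply_eq hT _ (inner_map_adjoint_apply hT hUdom hUT y)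

end

end LinearPMap

open LinearPMap in
theorem apply_eq_smul_of_mem_defect {T : H →ₗ.[ℂ] H} (hT : Dense (T.domain : Set H))
    (hsymm : T.IsFormalAdjoint T) {U : H ≃ₗᵢ[ℂ] H}
    (hUdom : ∀ x : H, x ∈ T.domain ↔ U x ∈ T.domain)
    (hUT : ∀ x : T.domain, T ⟨U (x : H), (hUdom (x : H)).mp x.2⟩ = U (T x))
    {c : ℂ} (hc : ∀ x : T.adjoint.domain, U (x : H) - c • (x : H) ∈ T.domain)
    {lam : ℂ} (hlam : lam.im ≠ 0) {x : H} (hx : x ∈ defect T lam) : U x = c • x := by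
  obtain ⟨v, rfl, hv⟩ := mem_defect_iff.mp hx
  let w : T.adjoint.domain := ⟨U v, map_mem_adjoint_domain hT hUdom hUT v⟩ - c • v
  have hw : T.adjoint w = lam • (w : H) := by
    rw [LinearPMap.map_sub, LinearPMap.map_smul, adjoint_apply_map hT hUdom hUT, hv,
      _root_.map_smul, smul_comm c lam, ← smul_sub]
    rfl
  have hTw : T ⟨w, hc v⟩ = lam • (w : H) := ((hsymm.le_adjoint hT).2 rfl).trans hw
  exact sub_eq_zero.mp (hsymm.eq_zero_of_apply_eq_smul hlam hTw)

theorem statement17_general [Nontrivial H] (T : H →ₗ.[ℂ] H)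
    (hdense : Dense (T.domain : Set H))
    (hsymm : ∀ x y : T.domain, (inner ℂ (T x) ((y : H)) : ℂ) = inner ℂ ((x : H)) (T y))
    (hsimple : Dense ((⨆ lam ∈ {z : ℂ | z.im ≠ 0}, defect T lam : Submodule ℂ H) : Set H))
    (U : H ≃ₗᵢ[ℂ] H)
    (hUdom : ∀ x : H, x ∈ T.domain ↔ U x ∈ T.domain)
    (hUT : ∀ x : T.domain, T ⟨U (x : H), (hUdom (x : H)).mp x.2⟩ = U (T x))
    (c : ℂ)
    (hc : ∀ x : T.adjoint.domain, U (x : H) - c • (x : H) ∈ T.domain) :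
    ‖c‖ = 1 ∧ ∀ x : H, U x = c • x := by
  have hdefect : (⨆ lam ∈ {z : ℂ | z.im ≠ 0}, defect T lam) ≤
      LinearMap.eqLocus (U : H →ₗ[ℂ] H) (c • LinearMap.id) :=
    iSup₂_le fun _ hlam _ hx => apply_eq_smul_of_mem_defect hdense hsymm hUdom hUT hc hlam hx
  have hU : ∀ x : H, U x = c • x :=
    congrFun (Continuous.ext_on hsimple U.continuous (continuous_const_smul c) fun _ hx => hdefect hx)
  obtain ⟨x, hx⟩ := exists_ne (0 : H)
  refine ⟨?_, hU⟩
  have hnorm : ‖c‖ * ‖x‖ = 1 * ‖x‖ := by rw [← norm_smul, ← hU, U.norm_map, one_mul]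
  exact mul_right_cancel₀ (norm_ne_zero_iff.mpr hx) hnorm

/-- Let `T` be a densely defined closed simple symmetric operator in a nonzero Hilbert
space `H` and `U` a unitary symmetry of `T` (`U(D(T)) = D(T)` and `TU = UT` on `D(T)`).
If `c ∈ ℂ` is such that `Ux − c·x ∈ D(T)` for every `x ∈ D(T*)`, then `|c| = 1` and
`U = c·Id` on `H`. -/
theorem statement17 [Nontrivial H] (T : H →ₗ.[ℂ] H)
    (hdense : Dense (T.domain : Set H))
    (hclosed : IsClosed (T.graph : Set (H × H)))
    (hsymm : ∀ x y : T.domain, (inner ℂ (T x) ((y : H)) : ℂ) = inner ℂ ((x : H)) (T y))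
    (hsimple : Dense ((⨆ lam ∈ {z : ℂ | z.im ≠ 0}, defect T lam : Submodule ℂ H) : Set H))
    (U : H ≃ₗᵢ[ℂ] H)
    (hUdom : ∀ x : H, x ∈ T.domain ↔ U x ∈ T.domain)
    (hUT : ∀ x : T.domain, T ⟨U (x : H), (hUdom (x : H)).mp x.2⟩ = U (T x))
    (c : ℂ)
    (hc : ∀ x : T.adjoint.domain, U (x : H) - c • (x : H) ∈ T.domain) :
    ‖c‖ = 1 ∧ ∀ x : H, U x = c • x :=
  statement17_general T hdense hsymm hsimple U hUdom hUT c hc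

end
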